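/- Let D₀ = [[1,2,0],[0,0,1],[0,0,0]] and D₁ = [[0,0,0],[2,0,0],[0,1,2]]. For every real number t, lim_{k→∞} (1/k)·ln((1/2^k) ∑_{z∈{0,1}^k} ‖D_z‖^t) = ln((2^t + 1)/2). In particular the generalized Lyapunov exponent for these quadrinomial transfer matrices coincides with that of the binomial case. -/

import Mathlib

/-- The transfer matrices for counting odd coefficients of `(1+x+x²+x³)^n`. -/
noncomputable def quadD0 : Matrix (Fin 3) (Fin 3) ℝ := !![1, 2, 0; 0, 0, 1; 0, 0, 0]

noncomputable def quadD1 : Matrix (Fin 3) (Fin 3) ℝ := !![0, 0, 0; 2, 0, 0; 0, 1, 2]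

/-- The ordered product `D_{z₀} D_{z₁} ⋯ D_{z_{k−1}}` along a binary word `z`
(`false ↦ D₀`, `true ↦ D₁`). -/
noncomputable def quadProd {k : ℕ} (z : Fin k → Bool) : Matrix (Fin 3) (Fin 3) ℝ :=
  (List.ofFn fun i => if z i then quadD1 else quadD0).prod

/-- The entrywise ℓ¹ matrix norm: the sum of the absolute values of the entries. -/
noncomputable def quadNorm (A : Matrix (Fin 3) (Fin 3) ℝ) : ℝ := ∑ i, ∑ j, |A i j|

/-! The column sums `c(z) = 𝟙ᵀ D_z` satisfy a linear recursion: appending the letter `0` sends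
`(c₀, c₁, c₂)` to `(c₀, 2c₀, c₁)` and appending `1` sends it to `(2c₁, c₂, 2c₂)`. Each new
coordinate is some `c_a` for one letter and some `2c_b` for the other, so by induction
`∑_z c_j(z)^t = (2^t + 1)^k` exactly, for every `j`. As `D_z ≥ 0`, `‖D_z‖ = c₀ + c₁ + c₂` lies
between `c₂` and three times the largest `c_j`, which bounds the moment `∑_z ‖D_z‖^t` above by a
constant times `(2^t + 1)^k`. Below, the words ending in `11` alone suffice, since
`‖D_{z11}‖ = 8 c₂(z)`. Constant factors disappear in `(1/k) log`. -/

open Filter Topology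
open scoped Matrix

theorem Fin.sum_pi_succ_snoc {α M : Type*} [Fintype α] [AddCommMonoid M] {k : ℕ}
    (f : (Fin (k + 1) → α) → M) :
    ∑ z : Fin (k + 1) → α, f z = ∑ z : Fin k → α, ∑ a : α, f (Fin.snoc z a) := by
  rw [← (Fin.snocEquiv fun _ => α).sum_comp f, Fintype.sum_prod_type, Finset.sum_comm]
  rfl

theorem Real.rpow_sum_le_card_rpow_mul_sum_rpow {ι : Type*} [Fintype ι] [Nonempty ι]
    {v : ι → ℝ} (hv : ∀ i, 0 ≤ v i) {t : ℝ} (ht : 0 ≤ t) :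
    (∑ i, v i) ^ t ≤ (Fintype.card ι : ℝ) ^ t * ∑ i, v i ^ t := by
  obtain ⟨i₀, hi₀⟩ := Finite.exists_max v
  have hsum : ∑ i, v i ≤ Fintype.card ι * v i₀ := by
    simpa using Finset.sum_le_card_nsmul Finset.univ v (v i₀) fun i _ => hi₀ i
  calc (∑ i, v i) ^ t ≤ (Fintype.card ι * v i₀) ^ t :=
        Real.rpow_le_rpow (Finset.sum_nonneg fun i _ => hv i) hsum ht
    _ = (Fintype.card ι : ℝ) ^ t * v i₀ ^ t := Real.mul_rpow (Nat.cast_nonneg _) (hv i₀)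
    _ ≤ (Fintype.card ι : ℝ) ^ t * ∑ i, v i ^ t := by
      gcongr
      exact Finset.single_le_sum (f := fun i => v i ^ t)
        (fun i _ => Real.rpow_nonneg (hv i) t) (Finset.mem_univ i₀)

theorem tendsto_one_div_mul_log_of_geometric_bounds {s : ℕ → ℝ} {a C μ : ℝ}
    (ha : 0 < a) (hμ : 0 < μ) (hs : ∀ᶠ k in atTop, a * μ ^ k ≤ s k ∧ s k ≤ C * μ ^ k) :
    Tendsto (fun k : ℕ => (1 / (k : ℝ)) * Real.log (s k)) atTop (𝓝 (Real.log μ)) := by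
  have hlim (c : ℝ) : Tendsto (fun k : ℕ => Real.log c * (1 / (k : ℝ)) + Real.log μ)
      atTop (𝓝 (Real.log μ)) := by
    simpa using (tendsto_one_div_atTop_nhds_zero_nat.const_mul (Real.log c)).add_const
      (Real.log μ)
  have hlog_geom {c : ℝ} (hc : 0 < c) {k : ℕ} (hk : k ≠ 0) :
      (1 / (k : ℝ)) * Real.log (c * μ ^ k) = Real.log c * (1 / (k : ℝ)) + Real.log μ := by
    rw [Real.log_mul hc.ne' (pow_pos hμ k).ne', Real.log_pow]
    field_simp
  refine tendsto_of_tendsto_of_tendsto_of_le_of_le' (hlim a) (hlim C) ?_ ?_ <;>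
    filter_upwards [hs, eventually_ne_atTop 0] with k ⟨hlow, hup⟩ hk
  · rw [← hlog_geom ha hk]
    gcongr
  · have hpos : 0 < a * μ ^ k := by positivity
    have hC : 0 < C := pos_of_mul_pos_left (hpos.trans_le (hlow.trans hup)) (pow_pos hμ k).le
    rw [← hlog_geom hC hk]
    gcongr
    linarith

lemma quadProd_of_fin_zero (z : Fin 0 → Bool) : quadProd z = 1 := by
  simp [quadProd]

lemma quadProd_snoc {k : ℕ} (z : Fin k → Bool) (b : Bool) :
    quadProd (Fin.snoc z b) = quadProd z * if b then quadD1 else quadD0 := by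
  simp only [quadProd, List.ofFn_succ', Fin.snoc_castSucc, Fin.snoc_last,
    List.concat_eq_append, List.prod_append, List.prod_singleton]

lemma quadProd_nonneg {k : ℕ} (z : Fin k → Bool) (i j : Fin 3) : 0 ≤ quadProd z i j := by
  induction k generalizing i j with
  | zero => simp [quadProd_of_fin_zero, Matrix.one_apply, apply_ite]
  | succ k ih =>
    induction z using Fin.snocCases with
    | snoc z b =>
      rw [quadProd_snoc, Matrix.mul_apply]
      refine Finset.sum_nonneg fun l _ => mul_nonneg (ih z i l) ?_
      cases b <;> fin_cases l <;> fin_cases j <;> simp [quadD0, quadD1]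

noncomputable def quadColSum {k : ℕ} (z : Fin k → Bool) : Fin 3 → ℝ :=
  1 ᵥ* quadProd z

lemma quadColSum_snoc {k : ℕ} (z : Fin k → Bool) (b : Bool) :
    quadColSum (Fin.snoc z b) = quadColSum z ᵥ* if b then quadD1 else quadD0 := by
  simp only [quadColSum, quadProd_snoc, Matrix.vecMul_vecMul]

lemma quadColSum_snoc_false {k : ℕ} (z : Fin k → Bool) :
    quadColSum (Fin.snoc z false) = ![quadColSum z 0, 2 * quadColSum z 0, quadColSum z 1] := by
  ext j
  fin_cases j <;>
    simp [quadColSum_snoc, quadD0, Matrix.vecMul, dotProduct, Fin.sum_univ_three, mul_comm]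

lemma quadColSum_snoc_true {k : ℕ} (z : Fin k → Bool) :
    quadColSum (Fin.snoc z true) = ![2 * quadColSum z 1, quadColSum z 2, 2 * quadColSum z 2] := by
  ext j
  fin_cases j <;>
    simp [quadColSum_snoc, quadD1, Matrix.vecMul, dotProduct, Fin.sum_univ_three, mul_comm]

lemma quadColSum_pos {k : ℕ} (z : Fin k → Bool) (j : Fin 3) : 0 < quadColSum z j := by
  induction k generalizing j with
  | zero => simp [quadColSum, quadProd_of_fin_zero]
  | succ k ih =>
    induction z using Fin.snocCases with
    | snoc z b =>
      cases b <;> fin_cases j <;>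
        simp [quadColSum_snoc_false, quadColSum_snoc_true, ih]

lemma quadNorm_quadProd {k : ℕ} (z : Fin k → Bool) :
    quadNorm (quadProd z) = ∑ j, quadColSum z j := by
  simp only [quadNorm, quadColSum, Matrix.vecMul, dotProduct, Pi.one_apply, one_mul,
    abs_of_nonneg (quadProd_nonneg z _ _)]
  exact Finset.sum_comm

lemma sum_quadColSum_rpow (t : ℝ) (k : ℕ) (j : Fin 3) :
    ∑ z : Fin k → Bool, quadColSum z j ^ t = ((2 : ℝ) ^ t + 1) ^ k := by
  induction k generalizing j with
  | zero => simp [quadColSum, quadProd_of_fin_zero]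
  | succ k ih =>
    fin_cases j <;>
      simp [Fin.sum_pi_succ_snoc, quadColSum_snoc_false, quadColSum_snoc_true,
        Real.mul_rpow zero_le_two (quadColSum_pos _ _).le, Finset.sum_add_distrib, ← Finset.mul_sum, ih] <;>
      ring

lemma quadNorm_quadProd_snoc_true_true {k : ℕ} (z : Fin k → Bool) :
    quadNorm (quadProd (Fin.snoc (Fin.snoc z true) true)) = 8 * quadColSum z 2 := by
  simp only [quadNorm_quadProd, quadColSum_snoc_true, Fin.sum_univ_three, Matrix.cons_val_zero,
    Matrix.cons_val_one, Matrix.cons_val]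
  ring

lemma quadColSum_le_quadNorm {k : ℕ} (z : Fin k → Bool) (j : Fin 3) :
    quadColSum z j ≤ quadNorm (quadProd z) := by
  rw [quadNorm_quadProd]
  exact Finset.single_le_sum (fun i _ => (quadColSum_pos z i).le) (Finset.mem_univ j)

lemma sum_quadNorm_rpow_le (t : ℝ) (k : ℕ) :
    ∑ z : Fin k → Bool, quadNorm (quadProd z) ^ t
      ≤ (3 * 3 ^ t + 1) * ((2 : ℝ) ^ t + 1) ^ k := by
  have hr : 0 ≤ ((2 : ℝ) ^ t + 1) ^ k := by positivity
  have h3 : 0 ≤ (3 : ℝ) ^ t := by positivity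
  rcases le_or_gt 0 t with ht | ht
  · calc ∑ z : Fin k → Bool, quadNorm (quadProd z) ^ t
        ≤ ∑ z : Fin k → Bool, (3 : ℝ) ^ t * ∑ j, quadColSum z j ^ t := by
          gcongr with z
          simpa [quadNorm_quadProd] using
            Real.rpow_sum_le_card_rpow_mul_sum_rpow (fun j => (quadColSum_pos z j).le) ht
      _ = 3 * 3 ^ t * ((2 : ℝ) ^ t + 1) ^ k := by
          rw [← Finset.mul_sum, Finset.sum_comm]
          simp only [sum_quadColSum_rpow, Fin.sum_univ_three]
          ring
      _ ≤ (3 * 3 ^ t + 1) * ((2 : ℝ) ^ t + 1) ^ k := by linarith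
  · calc ∑ z : Fin k → Bool, quadNorm (quadProd z) ^ t
        ≤ ∑ z : Fin k → Bool, quadColSum z 2 ^ t := Finset.sum_le_sum fun z _ =>
          Real.rpow_le_rpow_of_nonpos (quadColSum_pos z 2) (quadColSum_le_quadNorm z 2) ht.le
      _ = ((2 : ℝ) ^ t + 1) ^ k := sum_quadColSum_rpow t k 2
      _ ≤ (3 * 3 ^ t + 1) * ((2 : ℝ) ^ t + 1) ^ k := by nlinarith

lemma le_sum_quadNorm_rpow (t : ℝ) (k : ℕ) :
    (8 : ℝ) ^ t * ((2 : ℝ) ^ t + 1) ^ k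
      ≤ ∑ z : Fin (k + 2) → Bool, quadNorm (quadProd z) ^ t := by
  have hnonneg {n : ℕ} (w : Fin n → Bool) : 0 ≤ quadNorm (quadProd w) ^ t :=
    Real.rpow_nonneg (by unfold quadNorm; positivity) t
  rw [Fin.sum_pi_succ_snoc, Fin.sum_pi_succ_snoc, ← sum_quadColSum_rpow t k 2, Finset.mul_sum]
  gcongr with z
  have h11 : (8 : ℝ) ^ t * quadColSum z 2 ^ t
      = quadNorm (quadProd (Fin.snoc (Fin.snoc z true) true)) ^ t := by
    rw [quadNorm_quadProd_snoc_true_true, Real.mul_rpow (by norm_num) (quadColSum_pos z 2).le]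
  simp only [Fintype.sum_bool]
  linarith [hnonneg (Fin.snoc (Fin.snoc z true) false), hnonneg (Fin.snoc (Fin.snoc z false) true),
    hnonneg (Fin.snoc (Fin.snoc z false) false)]

theorem quadrinomial_generalized_lyapunov (t : ℝ) :
    Filter.Tendsto
      (fun k : ℕ =>
        (1 / (k : ℝ)) * Real.log
          ((1 / 2 ^ k) * ∑ z : Fin k → Bool, quadNorm (quadProd z) ^ t))
      Filter.atTop (nhds (Real.log (((2 : ℝ) ^ t + 1) / 2))) := by
  set r : ℝ := (2 : ℝ) ^ t + 1
  have hr : 0 < r := by positivity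
  refine tendsto_one_div_mul_log_of_geometric_bounds (a := 8 ^ t / r ^ 2) (C := 3 * 3 ^ t + 1)
    (by positivity) (half_pos hr) ?_
  filter_upwards [eventually_ge_atTop 2] with k hk
  obtain ⟨m, rfl⟩ := Nat.exists_eq_add_of_le' hk
  constructor
  · calc 8 ^ t / r ^ 2 * (r / 2) ^ (m + 2) = 1 / 2 ^ (m + 2) * (8 ^ t * r ^ m) := by
          rw [div_pow]
          field_simp
          ring
      _ ≤ _ := by gcongr; exact le_sum_quadNorm_rpow t m
  · calc _ ≤ 1 / 2 ^ (m + 2) * ((3 * 3 ^ t + 1) * r ^ (m + 2)) := by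
          gcongr; exact sum_quadNorm_rpow_le t (m + 2)
      _ = (3 * 3 ^ t + 1) * (r / 2) ^ (m + 2) := by
          rw [div_pow]
          ring
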